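/- arXiv:1012.4982 — 6 statements merged into one kernel-verified Lean document; each statement's English description precedes it below -/
import Mathlib

section
/- Let η be a real polynomial of degree at most 2, let a < b be real numbers, and set m = (a + b)/2. Then ((b − a)/6)·( η(a)² + 4 η(m)² + η(b)² ) ≤ (5/2) ∫_a^b η(x)² dx. -/
/-!
On `[a, b]` with midpoint `m`, the exact integral of the square of a quadratic `η` is a quadratic
form in `x = η a`, `y = η m`, `z = η b`, namely `(b - a) / 15 * (2x² + 8y² + 2z² - xz + 2y(x + z))`.
Five halves of it exceed the Simpson sum `(b - a) / 6 * (x² + 4y² + z²)` by `(b - a) / 6` times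
`(x + y - z/2)² + 3(y + z/2)²`.
-/

open intervalIntegral

theorem sq_add_four_mul_sq_add_sq_le (x y z : ℝ) :
    x ^ 2 + 4 * y ^ 2 + z ^ 2 ≤ 2 * x ^ 2 + 8 * y ^ 2 + 2 * z ^ 2 - x * z + 2 * y * (x + z) := by
  have hsos : 2 * x ^ 2 + 8 * y ^ 2 + 2 * z ^ 2 - x * z + 2 * y * (x + z)
      - (x ^ 2 + 4 * y ^ 2 + z ^ 2) = (x + y - z / 2) ^ 2 + 3 * (y + z / 2) ^ 2 := by ring
  linarith [sq_nonneg (x + y - z / 2), sq_nonneg (y + z / 2)]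

namespace Polynomial

theorem integral_sq_eval_of_degree_le_two {p : ℝ[X]} (hp : p.degree ≤ 2) (a b : ℝ) :
    ∫ x in a..b, p.eval x ^ 2 =
      (b - a) / 15 * (2 * p.eval a ^ 2 + 8 * p.eval ((a + b) / 2) ^ 2 + 2 * p.eval b ^ 2
        - p.eval a * p.eval b + 2 * p.eval ((a + b) / 2) * (p.eval a + p.eval b)) := by
  set c₀ := p.coeff 0
  set c₁ := p.coeff 1
  set c₂ := p.coeff 2
  have heval : ∀ x, p.eval x = c₂ * x ^ 2 + c₁ * x + c₀ := fun x => by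
    rw [eq_quadratic_of_degree_le_two hp]
    simp [c₀, c₁, c₂]
  -- Writing every monomial as `c * x ^ k` lets `integral_const_mul` and `integral_pow` apply.
  have hexpand : (fun x => p.eval x ^ 2) = fun x => c₂ ^ 2 * x ^ 4 + 2 * c₁ * c₂ * x ^ 3
      + (c₁ ^ 2 + 2 * c₀ * c₂) * x ^ 2 + 2 * c₀ * c₁ * x ^ 1 + c₀ ^ 2 * x ^ 0 := by
    funext x
    rw [heval]
    ring
  rw [hexpand]
  simp (disch := exact Continuous.intervalIntegrable (by fun_prop) _ _) only
    [integral_add, integral_const_mul, integral_pow]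
  simp only [heval]
  ring

end Polynomial

/-- Single-interval core of Lemma 3.4(i): the Simpson quadrature of the square
of a quadratic polynomial is bounded by `5/2` times its exact L² norm squared. -/
theorem stmt_7 (η : Polynomial ℝ) (hη : η.degree ≤ 2) (a b : ℝ) (hab : a < b) :
    ((b - a) / 6) *
        ((η.eval a) ^ 2 + 4 * (η.eval ((a + b) / 2)) ^ 2 + (η.eval b) ^ 2) ≤
      (5 / 2) * ∫ x in a..b, (η.eval x) ^ 2 := by
  rw [Polynomial.integral_sq_eval_of_degree_le_two hη]
  have hlen : 0 ≤ (b - a) / 6 := by linarith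
  calc (b - a) / 6 * (η.eval a ^ 2 + 4 * η.eval ((a + b) / 2) ^ 2 + η.eval b ^ 2)
      ≤ (b - a) / 6 * (2 * η.eval a ^ 2 + 8 * η.eval ((a + b) / 2) ^ 2 + 2 * η.eval b ^ 2
          - η.eval a * η.eval b + 2 * η.eval ((a + b) / 2) * (η.eval a + η.eval b)) :=
        mul_le_mul_of_nonneg_left (sq_add_four_mul_sq_add_sq_le _ _ _) hlen
    _ = _ := by ring
end

section
/- Let η be a real polynomial of degree at most 2, let a < b be real numbers, and set m = (a + b)/2. Then η(m)²·(b − a) ≤ (15/4) ∫_a^b η(x)² dx. -/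
/-!
Expanding `η` in its coefficients and integrating term by term gives the exact identity
`15 ∫_a^b η² = (b - a) Q(η(a), η(b), η(m))` for the quadratic form
`Q(A, B, M) = 2(A² + B²) + 8M² - AB + 2M(A + B)`. The bound then follows from `4M² ≤ Q(A, B, M)`,
since `Q(A, B, M) - 4M²` is a sum of squares.
-/

open Polynomial intervalIntegral

theorem integral_sq_quadratic (p q r a b : ℝ) :
    ∫ x in a..b, (r * x ^ 2 + q * x + p) ^ 2 =
      r ^ 2 * (b ^ 5 - a ^ 5) / 5 + q * r * (b ^ 4 - a ^ 4) / 2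
        + (q ^ 2 + 2 * p * r) * (b ^ 3 - a ^ 3) / 3 + p * q * (b ^ 2 - a ^ 2) + p ^ 2 * (b - a) := by
  let F : ℝ → ℝ := fun x => r ^ 2 * x ^ 5 / 5 + q * r * x ^ 4 / 2
    + (q ^ 2 + 2 * p * r) * x ^ 3 / 3 + p * q * x ^ 2 + p ^ 2 * x
  have hF : ∀ x, HasDerivAt F ((r * x ^ 2 + q * x + p) ^ 2) x := fun x =>
    (((((((hasDerivAt_pow 5 x).const_mul (r ^ 2)).div_const 5).add
      (((hasDerivAt_pow 4 x).const_mul (q * r)).div_const 2)).add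
      (((hasDerivAt_pow 3 x).const_mul (q ^ 2 + 2 * p * r)).div_const 3)).add
      ((hasDerivAt_pow 2 x).const_mul (p * q))).add
      ((hasDerivAt_id x).const_mul (p ^ 2))).congr_deriv (by norm_num; ring)
  rw [integral_eq_sub_of_hasDerivAt (fun x _ => hF x)
    ((by fun_prop : Continuous _).intervalIntegrable a b)]
  ring

theorem Polynomial.fifteen_mul_integral_sq_eval_of_degree_le_two {η : ℝ[X]} (hη : η.degree ≤ 2)
    (a b : ℝ) :
    15 * ∫ x in a..b, η.eval x ^ 2 =
      (b - a) * (2 * (η.eval a ^ 2 + η.eval b ^ 2) + 8 * η.eval ((a + b) / 2) ^ 2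
        - η.eval a * η.eval b + 2 * η.eval ((a + b) / 2) * (η.eval a + η.eval b)) := by
  have heval : ∀ x, η.eval x = η.coeff 2 * x ^ 2 + η.coeff 1 * x + η.coeff 0 := fun x => by
    conv_lhs => rw [eq_quadratic_of_degree_le_two hη]
    simp
  simp only [heval, integral_sq_quadratic]
  ring

theorem four_mul_sq_le_quadratic_form (A B M : ℝ) :
    4 * M ^ 2 ≤ 2 * (A ^ 2 + B ^ 2) + 8 * M ^ 2 - A * B + 2 * M * (A + B) := by
  linear_combination (1 / 2) * sq_nonneg (A + B + 2 * M) + (5 / 4) * sq_nonneg (A - B)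
    + (1 / 4) * sq_nonneg (A + B) + 2 * sq_nonneg M

/-- Midpoint bound from the proof of Lemma 3.5:
`η(m)² (b − a) ≤ (15/4) ∫_a^b η²` for quadratic `η`, `m = (a+b)/2`. -/
theorem stmt_8 (η : Polynomial ℝ) (hη : η.degree ≤ 2) (a b : ℝ) (hab : a < b) :
    (η.eval ((a + b) / 2)) ^ 2 * (b - a) ≤
      (15 / 4) * ∫ x in a..b, (η.eval x) ^ 2 := by
  have hQ := mul_le_mul_of_nonneg_left
    (four_mul_sq_le_quadratic_form (η.eval a) (η.eval b) (η.eval ((a + b) / 2)))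
    (sub_nonneg.2 hab.le)
  have hI := fifteen_mul_integral_sq_eval_of_degree_le_two hη a b
  linarith
end

section
/- Let a < b be real numbers, set m = (a + b)/2, let g : [a,b] → ℝ be twice continuously differentiable with g > 0 on [a,b], and let η be a real polynomial of degree at most 2 such that η ≥ 0 on [a,b] or η ≤ 0 on [a,b]. Then | ((b − a)/6)·( g(a)|η(a)| + 4 g(m)|η(m)| + g(b)|η(b)| ) − ∫_a^b g(x)|η(x)| dx | ≤ (1/3)·sup_{t∈[a,b]} |g''(t)| · (b − a)^{5/2} · ( ∫_a^b η(x)² dx )^{1/2}. -/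
/-!
Let `L` be the secant of `g` through `(a, g a)` and `(b, g b)`. Simpson's rule is exact for the
cubic `L * η`, so the quadrature error of `g * η` equals that of `(g - L) * η`. Convexity of
`± g + (M / 2) x²`, where `M` bounds `|g''|`, gives `|g - L| ≤ M (b - a)² / 8` on `[a, b]`.
When `η ≥ 0` (otherwise replace `η` by `-η`), the positivity of Simpson's weights and its
exactness for `η` bound both the quadrature and the integral of `(g - L) * η` by
`M (b - a)² / 8 * ∫ η`, and `∫ η ≤ √(b - a) ‖η‖₂` by Cauchy–Schwarz.
-/

open Polynomial Set intervalIntegral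

noncomputable def simpson (f : ℝ → ℝ) (a b : ℝ) : ℝ :=
  (b - a) / 6 * (f a + 4 * f ((a + b) / 2) + f b)

theorem integral_eval_eq_simpson {p : ℝ[X]} (hp : p.degree ≤ 3) (a b : ℝ) :
    ∫ x in a..b, p.eval x = simpson p.eval a b := by
  have hp' : p.natDegree < 4 := Nat.lt_succ_of_le (natDegree_le_of_degree_le hp)
  simp_rw [eval_eq_sum_range' hp']
  rw [integral_finsetSum fun i _ => Continuous.intervalIntegrable (by fun_prop) _ _]
  simp only [Finset.sum_range_succ, Finset.sum_range_zero, integral_const_mul, integral_pow,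
    simpson]
  ring

noncomputable def secantPoly (g : ℝ → ℝ) (a b : ℝ) : ℝ[X] :=
  C (g a) + C ((g b - g a) / (b - a)) * (X - C a)

theorem eval_secantPoly (g : ℝ → ℝ) (a b x : ℝ) :
    (secantPoly g a b).eval x = g a + (g b - g a) / (b - a) * (x - a) := by
  simp [secantPoly]

theorem degree_secantPoly_le (g : ℝ → ℝ) (a b : ℝ) : (secantPoly g a b).degree ≤ 1 := by
  unfold secantPoly; compute_degree

theorem ConvexOn.le_secant {f : ℝ → ℝ} {a b x : ℝ} (hf : ConvexOn ℝ (Icc a b) f) (hab : a < b)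
    (hx : x ∈ Icc a b) : f x ≤ (secantPoly f a b).eval x := by
  have hba : 0 < b - a := sub_pos.2 hab
  have key := hf.2 (left_mem_Icc.2 hab.le) (right_mem_Icc.2 hab.le)
    (div_nonneg (sub_nonneg.2 hx.2) hba.le) (div_nonneg (sub_nonneg.2 hx.1) hba.le)
    (by field_simp; ring)
  have hx' : ((b - x) / (b - a)) • a + ((x - a) / (b - a)) • b = x := by
    simp only [smul_eq_mul]; field_simp; ring
  rw [hx', smul_eq_mul, smul_eq_mul] at key
  rw [eval_secantPoly]
  calc f x ≤ _ := key
    _ = _ := by field_simp; ring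

theorem convexOn_mul_add_sq {g : ℝ → ℝ} (hg : ContDiff ℝ 2 g) {a b M σ : ℝ} (hσ : |σ| = 1)
    (hM : ∀ t ∈ Icc a b, |deriv (deriv g) t| ≤ M) :
    ConvexOn ℝ (Icc a b) fun x => σ * g x + M / 2 * x ^ 2 := by
  have hg1 : Differentiable ℝ g := hg.differentiable two_ne_zero
  have hg2 : Differentiable ℝ (deriv g) := hg.differentiable_deriv_two
  have h1 (x : ℝ) : HasDerivAt (fun x => σ * g x + M / 2 * x ^ 2) (σ * deriv g x + M * x) x :=
    ((hg1 x).hasDerivAt.const_mul σ).add ((hasDerivAt_pow 2 x).const_mul (M / 2))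
      |>.congr_deriv (by push_cast; ring)
  have h2 (x : ℝ) : HasDerivAt (fun x => σ * deriv g x + M * x) (σ * deriv (deriv g) x + M) x :=
    ((hg2 x).hasDerivAt.const_mul σ).add ((hasDerivAt_id x).const_mul M)
      |>.congr_deriv (by ring)
  have hd : deriv (fun x => σ * g x + M / 2 * x ^ 2) = fun x => σ * deriv g x + M * x :=
    funext fun x => (h1 x).deriv
  refine convexOn_of_deriv2_nonneg' (convex_Icc a b)
    (fun x _ => (h1 x).differentiableAt.differentiableWithinAt)
    (hd ▸ fun x _ => (h2 x).differentiableAt.differentiableWithinAt) fun x hx => ?_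
  rw [Function.iterate_succ_apply, Function.iterate_one, hd, (h2 x).deriv]
  have := neg_abs_le (σ * deriv (deriv g) x)
  rw [abs_mul, hσ, one_mul] at this
  linarith [hM x hx]

theorem mul_sub_secantPoly_le {g : ℝ → ℝ} (hg : ContDiff ℝ 2 g) {a b M σ x : ℝ} (hσ : |σ| = 1)
    (hab : a < b) (hM : ∀ t ∈ Icc a b, |deriv (deriv g) t| ≤ M) (hx : x ∈ Icc a b) :
    σ * (g x - (secantPoly g a b).eval x) ≤ M / 2 * ((x - a) * (b - x)) := by
  -- the secant of `x ↦ x ^ 2` exceeds it on `[a, b]` by exactly `(x - a) * (b - x)`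
  have key := (convexOn_mul_add_sq hg hσ hM).le_secant hab hx
  have hslope : (σ * g b + M / 2 * b ^ 2 - (σ * g a + M / 2 * a ^ 2)) / (b - a) =
      σ * ((g b - g a) / (b - a)) + M / 2 * (a + b) := by
    field_simp [(sub_pos.2 hab).ne']; ring
  rw [eval_secantPoly, hslope] at key
  rw [eval_secantPoly]
  linarith

theorem abs_sub_secantPoly_le {g : ℝ → ℝ} (hg : ContDiff ℝ 2 g) {a b M x : ℝ} (hab : a < b)
    (hM : ∀ t ∈ Icc a b, |deriv (deriv g) t| ≤ M) (hx : x ∈ Icc a b) :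
    |g x - (secantPoly g a b).eval x| ≤ M * (b - a) ^ 2 / 8 := by
  have hM0 : 0 ≤ M := (abs_nonneg _).trans (hM a (left_mem_Icc.2 hab.le))
  have hup := mul_sub_secantPoly_le hg (σ := 1) (by simp) hab hM hx
  have hlow := mul_sub_secantPoly_le hg (σ := -1) (by simp) hab hM hx
  have hw : (x - a) * (b - x) ≤ (b - a) ^ 2 / 4 := by nlinarith [sq_nonneg (a + b - 2 * x)]
  rw [abs_le]
  constructor <;> nlinarith

theorem sq_intervalIntegral_le_mul_integral_sq {a b : ℝ} {f : ℝ → ℝ} (hab : a ≤ b)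
    (hf : Continuous f) : (∫ x in a..b, f x) ^ 2 ≤ (b - a) * ∫ x in a..b, f x ^ 2 := by
  set I := ∫ x in a..b, f x
  rcases hab.eq_or_lt with rfl | hab
  · simp [I]
  set c := I / (b - a)
  have hvar : 0 ≤ ∫ x in a..b, (f x - c) ^ 2 :=
    integral_nonneg hab.le fun x _ => sq_nonneg _
  have hexp : ∫ x in a..b, (f x - c) ^ 2 =
      (∫ x in a..b, f x ^ 2) - 2 * c * I + c ^ 2 * (b - a) := by
    simp_rw [sub_sq, mul_right_comm _ _ c]
    rw [integral_add, integral_sub, integral_const_mul, integral_const, smul_eq_mul]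
    · ring
    all_goals exact Continuous.intervalIntegrable (by fun_prop) _ _
  have hba : 0 < b - a := sub_pos.2 hab
  have : c * (b - a) = I := div_mul_cancel₀ I hba.ne'
  nlinarith

theorem intervalIntegral_le_sqrt_mul_sqrt_integral_sq {a b : ℝ} {f : ℝ → ℝ} (hab : a ≤ b)
    (hf : Continuous f) : ∫ x in a..b, f x ≤ √(b - a) * √(∫ x in a..b, f x ^ 2) := by
  rw [← Real.sqrt_mul (sub_nonneg.2 hab)]
  exact Real.le_sqrt_of_sq_le (sq_intervalIntegral_le_mul_integral_sq hab hf)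

theorem abs_simpson_mul_le {e ζ : ℝ → ℝ} {a b K : ℝ} (hab : a ≤ b)
    (he : ∀ x ∈ Icc a b, |e x| ≤ K) (hζ : ∀ x ∈ Icc a b, 0 ≤ ζ x) :
    |simpson (fun x => e x * ζ x) a b| ≤ K * simpson ζ a b := by
  have bound : ∀ x ∈ Icc a b, |e x * ζ x| ≤ K * ζ x := fun x hx => by
    rw [abs_mul, abs_of_nonneg (hζ x hx)]
    exact mul_le_mul_of_nonneg_right (he x hx) (hζ x hx)
  have ha := bound a (left_mem_Icc.2 hab)
  have hm := bound ((a + b) / 2) ⟨by linarith, by linarith⟩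
  have hb := bound b (right_mem_Icc.2 hab)
  have hsum := abs_add_three (e a * ζ a) (4 * (e ((a + b) / 2) * ζ ((a + b) / 2))) (e b * ζ b)
  rw [abs_mul 4, abs_of_pos (by norm_num : (0 : ℝ) < 4)] at hsum
  have hh : 0 ≤ (b - a) / 6 := by linarith
  simp only [simpson]
  rw [abs_mul, abs_of_nonneg hh]
  calc _ ≤ (b - a) / 6 * (K * (ζ a + 4 * ζ ((a + b) / 2) + ζ b)) :=
        mul_le_mul_of_nonneg_left (by linarith) hh
    _ = _ := by ring

theorem abs_intervalIntegral_mul_le {e ζ : ℝ → ℝ} {a b K : ℝ} (hab : a ≤ b)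
    (hec : Continuous e) (hζc : Continuous ζ)
    (he : ∀ x ∈ Icc a b, |e x| ≤ K) (hζ : ∀ x ∈ Icc a b, 0 ≤ ζ x) :
    |∫ x in a..b, e x * ζ x| ≤ K * ∫ x in a..b, ζ x := by
  rw [← integral_const_mul]
  refine (abs_integral_le_integral_abs hab).trans <| integral_mono_on hab
    (Continuous.intervalIntegrable (by fun_prop) _ _)
    (Continuous.intervalIntegrable (by fun_prop) _ _) fun x hx => ?_
  rw [abs_mul, abs_of_nonneg (hζ x hx)]
  exact mul_le_mul_of_nonneg_right (he x hx) (hζ x hx)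

theorem abs_simpson_sub_integral_mul_le {g : ℝ → ℝ} (hg : ContDiff ℝ 2 g) {a b M : ℝ}
    (hab : a < b) (hM : ∀ t ∈ Icc a b, |deriv (deriv g) t| ≤ M) {ζ : ℝ[X]} (hζ : ζ.degree ≤ 2)
    (hζ0 : ∀ x ∈ Icc a b, 0 ≤ ζ.eval x) :
    |simpson (fun x => g x * ζ.eval x) a b - ∫ x in a..b, g x * ζ.eval x| ≤
      M / 4 * (b - a) ^ 2 * √(b - a) * √(∫ x in a..b, ζ.eval x ^ 2) := by
  set L := secantPoly g a b
  set e := fun x => g x - L.eval x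
  have hM0 : 0 ≤ M := (abs_nonneg _).trans (hM a (left_mem_Icc.2 hab.le))
  have he : ∀ x ∈ Icc a b, |e x| ≤ M * (b - a) ^ 2 / 8 := fun x hx =>
    abs_sub_secantPoly_le hg hab hM hx
  have hsplit : simpson (fun x => g x * ζ.eval x) a b - ∫ x in a..b, g x * ζ.eval x =
      simpson (fun x => e x * ζ.eval x) a b - ∫ x in a..b, e x * ζ.eval x := by
    have hLζ := integral_eval_eq_simpson ((degree_mul_le L ζ).trans
      (add_le_add (degree_secantPoly_le g a b) hζ)) a b
    have hint : ∫ x in a..b, g x * ζ.eval x =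
        (∫ x in a..b, e x * ζ.eval x) + ∫ x in a..b, (L * ζ).eval x := by
      rw [← integral_add (Continuous.intervalIntegrable (by fun_prop) _ _)
        (Continuous.intervalIntegrable (by fun_prop) _ _)]
      simp only [e, eval_mul]
      ring_nf
    rw [hint, hLζ]
    simp only [simpson, e, eval_mul]
    ring
  have hζint : simpson ζ.eval a b = ∫ x in a..b, ζ.eval x :=
    (integral_eval_eq_simpson (hζ.trans (by norm_num)) a b).symm
  have hCS := intervalIntegral_le_sqrt_mul_sqrt_integral_sq hab.le ζ.continuous
  calc _ = |simpson (fun x => e x * ζ.eval x) a b - ∫ x in a..b, e x * ζ.eval x| := by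
        rw [hsplit]
    _ ≤ |simpson (fun x => e x * ζ.eval x) a b| + |∫ x in a..b, e x * ζ.eval x| := abs_sub _ _
    _ ≤ M * (b - a) ^ 2 / 8 * (∫ x in a..b, ζ.eval x) +
          M * (b - a) ^ 2 / 8 * ∫ x in a..b, ζ.eval x := by
        gcongr
        · rw [← hζint]; exact abs_simpson_mul_le hab.le he hζ0
        · exact abs_intervalIntegral_mul_le hab.le (by fun_prop) ζ.continuous he hζ0
    _ ≤ M * (b - a) ^ 2 / 8 * (√(b - a) * √(∫ x in a..b, ζ.eval x ^ 2)) +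
          M * (b - a) ^ 2 / 8 * (√(b - a) * √(∫ x in a..b, ζ.eval x ^ 2)) := by
        gcongr
    _ = _ := by ring

theorem le_ciSup_Icc_of_continuous {f : ℝ → ℝ} (hf : Continuous f) {a b t : ℝ}
    (ht : t ∈ Icc a b) : f t ≤ ⨆ s : Icc a b, f s :=
  le_ciSup (isCompact_range (hf.comp continuous_subtype_val)).bddAbove (⟨t, ht⟩ : Icc a b)

theorem abs_simpson_sub_integral_mul_abs_le {g : ℝ → ℝ} (hg : ContDiff ℝ 2 g) {a b M : ℝ}
    (hab : a < b) (hM : ∀ t ∈ Icc a b, |deriv (deriv g) t| ≤ M) {η : ℝ[X]} (hη : η.degree ≤ 2)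
    (hsign : (∀ x ∈ Icc a b, 0 ≤ η.eval x) ∨ (∀ x ∈ Icc a b, η.eval x ≤ 0)) :
    |simpson (fun x => g x * |η.eval x|) a b - (∫ x in a..b, g x * |η.eval x|)| ≤
      M / 4 * (b - a) ^ 2 * √(b - a) * √(∫ x in a..b, η.eval x ^ 2) := by
  obtain ⟨ζ, hζ, hζ0, hηζ⟩ : ∃ ζ : ℝ[X], ζ.degree ≤ 2 ∧ (∀ x ∈ Icc a b, 0 ≤ ζ.eval x) ∧
      ∀ x ∈ Icc a b, |η.eval x| = ζ.eval x := by
    rcases hsign with h | h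
    · exact ⟨η, hη, h, fun x hx => abs_of_nonneg (h x hx)⟩
    · exact ⟨-η, by rwa [degree_neg], fun x hx => by simpa using h x hx,
        fun x hx => by simpa using abs_of_nonpos (h x hx)⟩
  have hint : ∫ x in a..b, g x * |η.eval x| = ∫ x in a..b, g x * ζ.eval x :=
    integral_congr fun x hx => by
      rw [uIcc_of_le hab.le] at hx
      simp only [hηζ x hx]
  have hsq : ∫ x in a..b, η.eval x ^ 2 = ∫ x in a..b, ζ.eval x ^ 2 :=
    integral_congr fun x hx => by
      rw [uIcc_of_le hab.le] at hx
      simp only [← sq_abs (η.eval x), hηζ x hx]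
  simp only [simpson]
  rw [hηζ a (left_mem_Icc.2 hab.le), hηζ b (right_mem_Icc.2 hab.le),
    hηζ _ ⟨by linarith, by linarith⟩, hint, hsq]
  exact abs_simpson_sub_integral_mul_le hg hab hM hζ hζ0

theorem stmt_11_general (a b : ℝ) (hab : a < b) (g : ℝ → ℝ) (hg : ContDiff ℝ 2 g)
    (η : Polynomial ℝ) (hη : η.degree ≤ 2)
    (hsign : (∀ x ∈ Set.Icc a b, 0 ≤ η.eval x) ∨ (∀ x ∈ Set.Icc a b, η.eval x ≤ 0)) :
    |(((b - a) / 6) *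
          (g a * |η.eval a| + 4 * g ((a + b) / 2) * |η.eval ((a + b) / 2)|
            + g b * |η.eval b|) -
        ∫ x in a..b, g x * |η.eval x|)| ≤
      (1 / 3) * (⨆ t : Set.Icc a b, |deriv (deriv g) (t : ℝ)|) *
        (b - a) ^ ((5 : ℝ) / 2) * Real.sqrt (∫ x in a..b, (η.eval x) ^ 2) := by
  set M := ⨆ t : Icc a b, |deriv (deriv g) (t : ℝ)|
  have hM : ∀ t ∈ Icc a b, |deriv (deriv g) t| ≤ M := fun t ht =>
    le_ciSup_Icc_of_continuous (f := fun t => |deriv (deriv g) t|)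
      ((hg.deriv' (n := 1)).continuous_deriv le_rfl).abs ht
  have hM0 : 0 ≤ M := (abs_nonneg _).trans (hM a (left_mem_Icc.2 hab.le))
  have hpow : (b - a) ^ ((5 : ℝ) / 2) = (b - a) ^ 2 * √(b - a) := by
    rw [show (5 : ℝ) / 2 = (2 : ℕ) + 1 / 2 by norm_num, Real.rpow_add (sub_pos.2 hab),
      Real.rpow_natCast, ← Real.sqrt_eq_rpow]
  have hX : 0 ≤ M * ((b - a) ^ 2 * √(b - a) * √(∫ x in a..b, η.eval x ^ 2)) := by positivity
  calc _ = |simpson (fun x => g x * |η.eval x|) a b - (∫ x in a..b, g x * |η.eval x|)| := by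
        simp only [simpson]; ring_nf
    _ ≤ M / 4 * (b - a) ^ 2 * √(b - a) * √(∫ x in a..b, η.eval x ^ 2) :=
        abs_simpson_sub_integral_mul_abs_le hg hab hM hη hsign
    _ ≤ _ := by rw [hpow]; linarith

/-- Single-interval form of Lemma 3.5: for a C² positive `g` and a quadratic
polynomial `η` of constant sign on `[a,b]`, the Simpson quadrature error of
`g|η|` is bounded by `(1/3) sup|g''| (b−a)^{5/2} ‖η‖_{L²(a,b)}`. -/
theorem stmt_11 (a b : ℝ) (hab : a < b) (g : ℝ → ℝ) (hg : ContDiff ℝ 2 g)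
    (hg_pos : ∀ x ∈ Set.Icc a b, 0 < g x)
    (η : Polynomial ℝ) (hη : η.degree ≤ 2)
    (hsign : (∀ x ∈ Set.Icc a b, 0 ≤ η.eval x) ∨ (∀ x ∈ Set.Icc a b, η.eval x ≤ 0)) :
    |(((b - a) / 6) *
          (g a * |η.eval a| + 4 * g ((a + b) / 2) * |η.eval ((a + b) / 2)|
            + g b * |η.eval b|) -
        ∫ x in a..b, g x * |η.eval x|)| ≤
      (1 / 3) * (⨆ t : Set.Icc a b, |deriv (deriv g) (t : ℝ)|) *
        (b - a) ^ ((5 : ℝ) / 2) * Real.sqrt (∫ x in a..b, (η.eval x) ^ 2) :=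
  stmt_11_general a b hab g hg η hη hsign
end

section
/- Let V be a real normed vector space, a : V × V → ℝ a bilinear map satisfying a(v, v) ≥ α‖v‖² for all v ∈ V with α > 0, let j, j_h : V → ℝ be functionals, f : V → ℝ a linear map, and V_h ⊆ V a subset. Suppose u ∈ V satisfies a(u, v − u) + j(v) − j(u) ≥ f(v − u) for all v ∈ V, and u_h ∈ V_h satisfies a(u_h, w − u_h) + j_h(w) − j_h(u_h) ≥ f(w − u_h) for all w ∈ V_h. Then for every v_h ∈ V_h: α‖u − u_h‖² ≤ a(u − u_h, u − v_h) + [ a(u, v_h − u) − f(v_h − u) ] + j(u_h) − j(u) + j_h(v_h) − j_h(u_h). -/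
theorem LinearMap.falk_identity {R M : Type*} [CommRing R] [AddCommGroup M] [Module R M]
    (a : M →ₗ[R] M →ₗ[R] R) (u uh vh : M) :
    a (u - uh) (u - uh) =
      a (u - uh) (u - vh) - a u (uh - u) - a uh (vh - uh) + a u (vh - u) := by
  simp only [map_sub, LinearMap.sub_apply]
  ring

theorem stmt_15_general {V : Type*} [NormedAddCommGroup V] [NormedSpace ℝ V]
    (a : V →ₗ[ℝ] V →ₗ[ℝ] ℝ) (α : ℝ)
    (hcoer : ∀ v : V, a v v ≥ α * ‖v‖ ^ 2)
    (j jh : V → ℝ) (f : V →ₗ[ℝ] ℝ) (Vh : Set V)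
    (u : V) (hu : ∀ v : V, a u (v - u) + j v - j u ≥ f (v - u))
    (uh : V)
    (hdis : ∀ w ∈ Vh, a uh (w - uh) + jh w - jh uh ≥ f (w - uh)) :
    ∀ vh ∈ Vh,
      α * ‖u - uh‖ ^ 2 ≤
        a (u - uh) (u - vh) + (a u (vh - u) - f (vh - u))
          + j uh - j u + jh vh - jh uh := by
  intro vh hvh
  have hcont := hu uh
  have hdisc := hdis vh hvh
  have hload : f (uh - u) + f (vh - uh) = f (vh - u) := by
    rw [← map_add, sub_add_sub_cancel']
  calc α * ‖u - uh‖ ^ 2 ≤ a (u - uh) (u - uh) := hcoer _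
    _ = a (u - uh) (u - vh) - a u (uh - u) - a uh (vh - uh) + a u (vh - u) :=
      a.falk_identity u uh vh
    _ ≤ _ := by linarith

/-- Abstract Falk-type error inequality from Propositions 3.1(ii)/4.1(ii):
for the continuous solution `u` and discrete solution `uh ∈ Vh` of the two
variational inequalities, and any `vh ∈ Vh`,
`α‖u − uh‖² ≤ a(u−uh, u−vh) + [a(u, vh−u) − f(vh−u)] + j(uh) − j(u) + jh(vh) − jh(uh)`. -/
theorem stmt_15 {V : Type*} [NormedAddCommGroup V] [NormedSpace ℝ V]
    (a : V →ₗ[ℝ] V →ₗ[ℝ] ℝ) (α : ℝ) (hα : 0 < α)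
    (hcoer : ∀ v : V, a v v ≥ α * ‖v‖ ^ 2)
    (j jh : V → ℝ) (f : V →ₗ[ℝ] ℝ) (Vh : Set V)
    (u : V) (hu : ∀ v : V, a u (v - u) + j v - j u ≥ f (v - u))
    (uh : V) (huh : uh ∈ Vh)
    (hdis : ∀ w ∈ Vh, a uh (w - uh) + jh w - jh uh ≥ f (w - uh)) :
    ∀ vh ∈ Vh,
      α * ‖u - uh‖ ^ 2 ≤
        a (u - uh) (u - vh) + (a u (vh - u) - f (vh - u))
          + j uh - j u + jh vh - jh uh :=
  stmt_15_general a α hcoer j jh f Vh u hu uh hdis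
end

section
/- Let V and Λ be real inner product spaces, a : V × V → ℝ a bilinear map with a(v, v) ≥ α‖v‖² for all v ∈ V (α > 0), T : V → Λ a linear map with ‖Tv‖ ≤ γ‖v‖ for all v ∈ V, K ⊆ Λ a convex set, f : V → ℝ linear, and ρ ≥ 0. Suppose: (1) u ∈ V, λ ∈ K satisfy a(u, v) + ⟨Tv, λ⟩ = f(v) for all v ∈ V and ⟨Tu, μ − λ⟩ ≤ 0 for all μ ∈ K; (2) λ' ∈ K, u' ∈ V satisfy a(u', v) + ⟨Tv, λ'⟩ = f(v) for all v ∈ V; (3) λ'' ∈ K satisfies the projection characterization ⟨(λ' + ρ T u') − λ'', μ − λ''⟩ ≤ 0 for all μ ∈ K. Then ‖λ'' − λ‖² ≤ ‖λ' − λ‖² − (2αρ − γ²ρ²)‖u' − u‖². -/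
/-!
Both `λ` and `λ''` are characterized by variational inequalities over `K`: `λ` is the projection
of `λ + ρ T u` and `λ''` that of `λ' + ρ T u'`. Adding the two inequalities gives firm
nonexpansiveness, `‖λ'' - λ‖ ≤ ‖(λ' - λ) + ρ T (u' - u)‖`. Subtracting the two state equations at
`v = u' - u` gives `⟪T (u' - u), λ' - λ⟫ = -a (u' - u) (u' - u)`, so expanding the square and using
coercivity of `a` and `‖T‖ ≤ γ` yields the claim.
-/

open scoped RealInnerProductSpace

section VariationalInequality

variable {E : Type*} [NormedAddCommGroup E] [InnerProductSpace ℝ E]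

theorem norm_sub_sq_le_inner_of_variational_ineq {x y p q : E}
    (hp : ⟪x - p, q - p⟫ ≤ 0) (hq : ⟪y - q, p - q⟫ ≤ 0) :
    ‖p - q‖ ^ 2 ≤ ⟪x - y, p - q⟫ := by
  have hsplit : ⟪x - y, p - q⟫ = ‖p - q‖ ^ 2 - ⟪x - p, q - p⟫ - ⟪y - q, p - q⟫ := by
    rw [← real_inner_self_eq_norm_sq, ← neg_sub p q, inner_neg_right, sub_neg_eq_add,
      ← inner_add_left, ← inner_sub_left]
    congr 1
    abel
  linarith

theorem norm_sub_le_of_variational_ineq {x y p q : E}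
    (hp : ⟪x - p, q - p⟫ ≤ 0) (hq : ⟪y - q, p - q⟫ ≤ 0) :
    ‖p - q‖ ≤ ‖x - y‖ := by
  have h := (norm_sub_sq_le_inner_of_variational_ineq hp hq).trans (real_inner_le_norm _ _)
  rcases (norm_nonneg (p - q)).eq_or_lt with h0 | h0
  · exact h0 ▸ norm_nonneg _
  · nlinarith

end VariationalInequality

theorem inner_map_sub_eq_neg_of_state_eq {V E : Type*} [AddCommGroup V] [Module ℝ V]
    [NormedAddCommGroup E] [InnerProductSpace ℝ E]
    {a : V →ₗ[ℝ] V →ₗ[ℝ] ℝ} {T : V →ₗ[ℝ] E} {f : V →ₗ[ℝ] ℝ} {u u' : V} {lam lam' : E}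
    (h : ∀ v, a u v + ⟪T v, lam⟫ = f v) (h' : ∀ v, a u' v + ⟪T v, lam'⟫ = f v) (v : V) :
    ⟪T v, lam' - lam⟫ = -a (u' - u) v := by
  rw [inner_sub_right, map_sub, LinearMap.sub_apply]
  linarith [h v, h' v]

theorem stmt_17_general {V E : Type*} [NormedAddCommGroup V] [InnerProductSpace ℝ V]
    [NormedAddCommGroup E] [InnerProductSpace ℝ E]
    (a : V →ₗ[ℝ] V →ₗ[ℝ] ℝ) (α : ℝ)
    (hcoer : ∀ v : V, a v v ≥ α * ‖v‖ ^ 2)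
    (T : V →ₗ[ℝ] E) (γ : ℝ) (hT : ∀ v : V, ‖T v‖ ≤ γ * ‖v‖)
    (K : Set E)
    (f : V →ₗ[ℝ] ℝ) (ρ : ℝ) (hρ : 0 ≤ ρ)
    (u : V) (lam : E) (hlamK : lam ∈ K)
    (h1 : ∀ v : V, a u v + ⟪T v, lam⟫ = f v)
    (h1' : ∀ μ ∈ K, ⟪T u, μ - lam⟫ ≤ 0)
    (lam' : E) (u' : V)
    (h2 : ∀ v : V, a u' v + ⟪T v, lam'⟫ = f v)
    (lam'' : E) (hlam''K : lam'' ∈ K)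
    (h3 : ∀ μ ∈ K, ⟪(lam' + ρ • T u') - lam'', μ - lam''⟫ ≤ 0) :
    ‖lam'' - lam‖ ^ 2 ≤
      ‖lam' - lam‖ ^ 2 - (2 * α * ρ - γ ^ 2 * ρ ^ 2) * ‖u' - u‖ ^ 2 := by
  have hfixed : ⟪(lam + ρ • T u) - lam, lam'' - lam⟫ ≤ 0 := by
    rw [add_sub_cancel_left, real_inner_smul_left]
    exact mul_nonpos_of_nonneg_of_nonpos hρ (h1' lam'' hlam''K)
  have hnonexp := norm_sub_le_of_variational_ineq (h3 lam hlamK) hfixed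
  have hdiff : (lam' + ρ • T u') - (lam + ρ • T u) = (lam' - lam) + ρ • T (u' - u) := by
    rw [map_sub, smul_sub]; abel
  rw [hdiff] at hnonexp
  have hcross : ⟪lam' - lam, T (u' - u)⟫ ≤ -(α * ‖u' - u‖ ^ 2) := by
    rw [real_inner_comm, inner_map_sub_eq_neg_of_state_eq h1 h2]
    linarith [hcoer (u' - u)]
  have hTsq : ‖T (u' - u)‖ ^ 2 ≤ γ ^ 2 * ‖u' - u‖ ^ 2 := by
    rw [← mul_pow]; exact pow_le_pow_left₀ (norm_nonneg _) (hT _) 2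
  calc ‖lam'' - lam‖ ^ 2 ≤ ‖(lam' - lam) + ρ • T (u' - u)‖ ^ 2 :=
        pow_le_pow_left₀ (norm_nonneg _) hnonexp 2
    _ = ‖lam' - lam‖ ^ 2 + 2 * (ρ * ⟪lam' - lam, T (u' - u)⟫) + ρ ^ 2 * ‖T (u' - u)‖ ^ 2 := by
        rw [norm_add_sq_real, real_inner_smul_right, norm_smul, Real.norm_eq_abs, mul_pow, sq_abs]
    _ ≤ ‖lam' - lam‖ ^ 2 - (2 * α * ρ - γ ^ 2 * ρ ^ 2) * ‖u' - u‖ ^ 2 := by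
        nlinarith [mul_le_mul_of_nonneg_left hcross hρ,
          mul_le_mul_of_nonneg_left hTsq (sq_nonneg ρ)]

/-- One-step contraction inequality ((3.37)/(4.29)) of the Uzawa iteration:
`‖λ'' − λ‖² ≤ ‖λ' − λ‖² − (2αρ − γ²ρ²)‖u' − u‖²`. -/
theorem stmt_17 {V E : Type*} [NormedAddCommGroup V] [InnerProductSpace ℝ V]
    [NormedAddCommGroup E] [InnerProductSpace ℝ E]
    (a : V →ₗ[ℝ] V →ₗ[ℝ] ℝ) (α : ℝ) (hα : 0 < α)
    (hcoer : ∀ v : V, a v v ≥ α * ‖v‖ ^ 2)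
    (T : V →ₗ[ℝ] E) (γ : ℝ) (hT : ∀ v : V, ‖T v‖ ≤ γ * ‖v‖)
    (K : Set E) (hK : Convex ℝ K)
    (f : V →ₗ[ℝ] ℝ) (ρ : ℝ) (hρ : 0 ≤ ρ)
    (u : V) (lam : E) (hlamK : lam ∈ K)
    (h1 : ∀ v : V, a u v + ⟪T v, lam⟫ = f v)
    (h1' : ∀ μ ∈ K, ⟪T u, μ - lam⟫ ≤ 0)
    (lam' : E) (hlam'K : lam' ∈ K) (u' : V)
    (h2 : ∀ v : V, a u' v + ⟪T v, lam'⟫ = f v)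
    (lam'' : E) (hlam''K : lam'' ∈ K)
    (h3 : ∀ μ ∈ K, ⟪(lam' + ρ • T u') - lam'', μ - lam''⟫ ≤ 0) :
    ‖lam'' - lam‖ ^ 2 ≤
      ‖lam' - lam‖ ^ 2 - (2 * α * ρ - γ ^ 2 * ρ ^ 2) * ‖u' - u‖ ^ 2 :=
  stmt_17_general a α hcoer T γ hT K f ρ hρ u lam hlamK h1 h1' lam' u' h2 lam'' hlam''K h3
end

section
/- Let V and Λ be finite-dimensional real inner product spaces, a : V × V → ℝ a bilinear map with a(v, v) ≥ α‖v‖² and |a(v, w)| ≤ M‖v‖‖w‖ for all v, w ∈ V (α > 0, M > 0), T : V → Λ a surjective linear map with ‖Tv‖ ≤ γ‖v‖ for all v ∈ V (γ > 0), K ⊆ Λ a nonempty closed convex set, and f : V → ℝ linear. Suppose u ∈ V and λ ∈ K satisfy a(u, v) + ⟨Tv, λ⟩ = f(v) for all v ∈ V and ⟨Tu, μ − λ⟩ ≤ 0 for all μ ∈ K. Let ρ satisfy 0 < ρ and ργ² < 2α, and let sequences (u^{(k)})_{k≥1} in V and (λ^{(k)})_{k≥1} in K satisfy: a(u^{(k)},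 v) + ⟨Tv, λ^{(k)}⟩ = f(v) for all v ∈ V and all k, and for every k the update λ^{(k+1)} ∈ K satisfies ⟨(λ^{(k)} + ρ T u^{(k)}) − λ^{(k+1)}, μ − λ^{(k+1)}⟩ ≤ 0 for all μ ∈ K. Then u^{(k)} → u and λ^{(k)} → λ as k → ∞. -/
open scoped RealInnerProductSpace
open Filter Topology

/-!
Write `w = u⁽ᵏ⁾ - u` and `e = λ⁽ᵏ⁾ - λ`, so that `a(w, v) = -⟪T v, e⟫` for all `v`.
Since `λ` is the projection of `λ + ρ T u` and the projection onto `K` is nonexpansive,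
`‖e⁽ᵏ⁺¹⁾‖ ≤ ‖e + ρ T w‖`, and expanding the square with coercivity and `‖T w‖ ≤ γ ‖w‖` gives
`‖e⁽ᵏ⁺¹⁾‖² + ρ (2α - ργ²) ‖w‖² ≤ ‖e‖²`. Telescoping makes `∑ ‖w‖²` finite, so `u⁽ᵏ⁾ → u`.
Finally a bounded right inverse of `T` turns `‖e‖² = -a(w, S e)` into `‖e‖ ≤ M ‖S‖ ‖w‖`,
so `λ⁽ᵏ⁾ → λ`.
-/

lemma norm_sub_le_of_inner_sub_nonpos {E : Type*} [NormedAddCommGroup E]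
    [InnerProductSpace ℝ E] {p p' q q' : E} (h : ⟪p - q, q' - q⟫ ≤ 0)
    (h' : ⟪p' - q', q - q'⟫ ≤ 0) : ‖q - q'‖ ≤ ‖p - p'‖ := by
  have key : ‖q - q'‖ ^ 2 ≤ ⟪p - p', q - q'⟫ := by
    have hsum : ⟪p - q, q' - q⟫ + ⟪p' - q', q - q'⟫ = ‖q - q'‖ ^ 2 - ⟪p - p', q - q'⟫ := by
      rw [← real_inner_self_eq_norm_sq]
      simp only [inner_sub_left, inner_sub_right, real_inner_comm]
      ring
    linarith
  have cs := real_inner_le_norm (p - p') (q - q')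
  nlinarith [norm_nonneg (q - q'), norm_nonneg (p - p')]

lemma tendsto_zero_of_add_mul_sq_le {D x : ℕ → ℝ} {c : ℝ} (hc : 0 < c) (hD : ∀ k, 0 ≤ D k)
    (hx : ∀ k, 0 ≤ x k) (h : ∀ k, D (k + 1) + c * x k ^ 2 ≤ D k) :
    Tendsto x atTop (𝓝 0) := by
  have htelescope : ∀ n, ∑ i ∈ Finset.range n, c * x i ^ 2 + D n ≤ D 0 := by
    intro n
    induction n with
    | zero => simp
    | succ n ih => rw [Finset.sum_range_succ]; linarith [h n]
  have hsum : Summable fun k => c * x k ^ 2 :=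
    summable_of_sum_range_le (c := D 0) (fun k => by positivity) fun n => by
      linarith [htelescope n, hD n]
  have hsq : Tendsto (fun k => x k ^ 2) atTop (𝓝 0) := by
    simpa [hc.ne'] using hsum.tendsto_atTop_zero.const_mul c⁻¹
  simpa [Real.sqrt_sq (hx _)] using hsq.sqrt

lemma LinearMap.exists_norm_preimage_le_of_surjective {V E : Type*} [NormedAddCommGroup V]
    [NormedSpace ℝ V] [NormedAddCommGroup E] [NormedSpace ℝ E] [FiniteDimensional ℝ E]
    (T : V →ₗ[ℝ] E) (hT : Function.Surjective T) :
    ∃ C, 0 ≤ C ∧ ∀ y, ∃ x, T x = y ∧ ‖x‖ ≤ C * ‖y‖ := by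
  obtain ⟨S, hS⟩ := T.exists_rightInverse_of_surjective (LinearMap.range_eq_top.2 hT)
  refine ⟨‖LinearMap.toContinuousLinearMap S‖, norm_nonneg _, fun y => ⟨S y, ?_, ?_⟩⟩
  · exact LinearMap.congr_fun hS y
  · exact (LinearMap.toContinuousLinearMap S).le_opNorm y

section Uzawa

variable {V E : Type*} [NormedAddCommGroup V] [InnerProductSpace ℝ V]
  [NormedAddCommGroup E] [InnerProductSpace ℝ E]
  (a : V →ₗ[ℝ] V →ₗ[ℝ] ℝ) (T : V →ₗ[ℝ] E)

lemma bilin_sub_eq_neg_inner_sub {f : V →ₗ[ℝ] ℝ} {x y : V} {l m : E}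
    (hx : ∀ v, a x v + ⟪T v, l⟫ = f v) (hy : ∀ v, a y v + ⟪T v, m⟫ = f v) (v : V) :
    a (x - y) v = -⟪T v, l - m⟫ := by
  rw [map_sub, LinearMap.sub_apply, inner_sub_right]
  linarith [hx v, hy v]

lemma norm_le_of_bilin_eq_neg_inner {M C : ℝ} (hM : 0 ≤ M) (hC : 0 ≤ C)
    (hbound : ∀ v w : V, |a v w| ≤ M * ‖v‖ * ‖w‖)
    (hS : ∀ y, ∃ x, T x = y ∧ ‖x‖ ≤ C * ‖y‖) {w : V} {e : E}
    (h : ∀ v, a w v = -⟪T v, e⟫) : ‖e‖ ≤ M * C * ‖w‖ := by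
  obtain ⟨x, rfl, hx⟩ := hS e
  have hsq : ‖T x‖ ^ 2 ≤ M * C * ‖w‖ * ‖T x‖ :=
    calc ‖T x‖ ^ 2 = -a w x := by rw [h, neg_neg, real_inner_self_eq_norm_sq]
      _ ≤ M * ‖w‖ * ‖x‖ := (neg_le_abs _).trans (hbound w x)
      _ ≤ M * ‖w‖ * (C * ‖T x‖) := by gcongr
      _ = M * C * ‖w‖ * ‖T x‖ := by ring
  have hbound_nonneg : 0 ≤ M * C * ‖w‖ := by positivity
  nlinarith [norm_nonneg (T x)]

variable {K : Set E} {u x : V} {lam l l' : E} {ρ : ℝ}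

lemma norm_sub_le_of_projection_step (hρ : 0 ≤ ρ) (hlam : lam ∈ K)
    (hsaddle : ∀ μ ∈ K, ⟪T u, μ - lam⟫ ≤ 0) (hl' : l' ∈ K)
    (hstep : ∀ μ ∈ K, ⟪(l + ρ • T x) - l', μ - l'⟫ ≤ 0) :
    ‖l' - lam‖ ≤ ‖(l - lam) + ρ • T (x - u)‖ := by
  -- `λ` is itself the projection of `λ + ρ T u`.
  have hfixed : ⟪(lam + ρ • T u) - lam, l' - lam⟫ ≤ 0 := by
    rw [add_sub_cancel_left, real_inner_smul_left]
    exact mul_nonpos_of_nonneg_of_nonpos hρ (hsaddle l' hl')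
  have hdiff : (l + ρ • T x) - (lam + ρ • T u) = (l - lam) + ρ • T (x - u) := by
    rw [map_sub, smul_sub]; abel
  simpa [hdiff] using norm_sub_le_of_inner_sub_nonpos (hstep lam hlam) hfixed

lemma norm_add_smul_sq_le {α γ : ℝ} (hρ : 0 ≤ ρ) (hcoer : ∀ v : V, a v v ≥ α * ‖v‖ ^ 2)
    (hT : ∀ v : V, ‖T v‖ ≤ γ * ‖v‖) {w : V} {e : E} (h : ∀ v, a w v = -⟪T v, e⟫) :
    ‖e + ρ • T w‖ ^ 2 ≤ ‖e‖ ^ 2 - ρ * (2 * α - ρ * γ ^ 2) * ‖w‖ ^ 2 := by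
  have hexpand : ‖e + ρ • T w‖ ^ 2 = ‖e‖ ^ 2 - 2 * ρ * a w w + ρ ^ 2 * ‖T w‖ ^ 2 := by
    rw [norm_add_sq_real, real_inner_smul_right, norm_smul, Real.norm_eq_abs, abs_of_nonneg hρ,
      h, real_inner_comm]
    ring
  have hcoer' : ρ * (α * ‖w‖ ^ 2) ≤ ρ * a w w := mul_le_mul_of_nonneg_left (hcoer w) hρ
  have hTw : ‖T w‖ ^ 2 ≤ (γ * ‖w‖) ^ 2 := pow_le_pow_left₀ (norm_nonneg _) (hT w) 2
  have hTw' : ρ ^ 2 * ‖T w‖ ^ 2 ≤ ρ ^ 2 * (γ * ‖w‖) ^ 2 := by gcongr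
  nlinarith

end Uzawa

theorem stmt_18_general {V E : Type*} [NormedAddCommGroup V] [InnerProductSpace ℝ V]
    [NormedAddCommGroup E] [InnerProductSpace ℝ E]
    [FiniteDimensional ℝ E]
    (a : V →ₗ[ℝ] V →ₗ[ℝ] ℝ) (α M : ℝ) (hM : 0 < M)
    (hcoer : ∀ v : V, a v v ≥ α * ‖v‖ ^ 2)
    (hbound : ∀ v w : V, |a v w| ≤ M * ‖v‖ * ‖w‖)
    (T : V →ₗ[ℝ] E) (hTsurj : Function.Surjective T)
    (γ : ℝ) (hT : ∀ v : V, ‖T v‖ ≤ γ * ‖v‖)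
    (K : Set E)
    (f : V →ₗ[ℝ] ℝ)
    (u : V) (lam : E) (hlamK : lam ∈ K)
    (h1 : ∀ v : V, a u v + ⟪T v, lam⟫ = f v)
    (h1' : ∀ μ ∈ K, ⟪T u, μ - lam⟫ ≤ 0)
    (ρ : ℝ) (hρ : 0 < ρ) (hρ0 : ρ * γ ^ 2 < 2 * α)
    (useq : ℕ → V) (lamseq : ℕ → E) (hlamseqK : ∀ k, lamseq k ∈ K)
    (hstep1 : ∀ k, ∀ v : V, a (useq k) v + ⟪T v, lamseq k⟫ = f v)
    (hstep2 : ∀ k, ∀ μ ∈ K,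
      ⟪(lamseq k + ρ • T (useq k)) - lamseq (k + 1), μ - lamseq (k + 1)⟫ ≤ 0) :
    Filter.Tendsto useq Filter.atTop (nhds u) ∧
      Filter.Tendsto lamseq Filter.atTop (nhds lam) := by
  have herr k := bilin_sub_eq_neg_inner_sub a T (hstep1 k) h1
  have hdecr : ∀ k, ‖lamseq (k + 1) - lam‖ ^ 2 + ρ * (2 * α - ρ * γ ^ 2) * ‖useq k - u‖ ^ 2
      ≤ ‖lamseq k - lam‖ ^ 2 := fun k => by
    have hproj := norm_sub_le_of_projection_step T hρ.le hlamK h1' (hlamseqK (k + 1)) (hstep2 k)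
    have hproj_sq := pow_le_pow_left₀ (norm_nonneg _) hproj 2
    linarith [norm_add_smul_sq_le a T hρ.le hcoer hT (herr k)]
  have hu : Tendsto (fun k => ‖useq k - u‖) atTop (𝓝 0) :=
    tendsto_zero_of_add_mul_sq_le (mul_pos hρ (sub_pos.2 hρ0))
      (fun k => sq_nonneg ‖lamseq k - lam‖) (fun _ => norm_nonneg _) hdecr
  obtain ⟨C, hC, hS⟩ := T.exists_norm_preimage_le_of_surjective hTsurj
  have hlam : Tendsto (fun k => ‖lamseq k - lam‖) atTop (𝓝 0) := by
    refine squeeze_zero (fun _ => norm_nonneg _)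
      (fun k => norm_le_of_bilin_eq_neg_inner a T hM.le hC hbound hS (herr k)) ?_
    simpa using hu.const_mul (M * C)
  exact ⟨tendsto_iff_norm_sub_tendsto_zero.2 hu, tendsto_iff_norm_sub_tendsto_zero.2 hlam⟩

/-- Abstract form of Theorem 3.4: convergence of the Uzawa-type algorithm.
Under the saddle-point relations for `(u, λ)`, the iterates `(u⁽ᵏ⁾, λ⁽ᵏ⁾)`
obtained from Step 1 (the linear problem) and Step 2 (the projected update,
characterized variationally) converge to `(u, λ)` whenever `0 < ρ` and
`ργ² < 2α`. -/
theorem stmt_18 {V E : Type*} [NormedAddCommGroup V] [InnerProductSpace ℝ V]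
    [NormedAddCommGroup E] [InnerProductSpace ℝ E]
    [FiniteDimensional ℝ V] [FiniteDimensional ℝ E]
    (a : V →ₗ[ℝ] V →ₗ[ℝ] ℝ) (α M : ℝ) (hα : 0 < α) (hM : 0 < M)
    (hcoer : ∀ v : V, a v v ≥ α * ‖v‖ ^ 2)
    (hbound : ∀ v w : V, |a v w| ≤ M * ‖v‖ * ‖w‖)
    (T : V →ₗ[ℝ] E) (hTsurj : Function.Surjective T)
    (γ : ℝ) (hγ : 0 < γ) (hT : ∀ v : V, ‖T v‖ ≤ γ * ‖v‖)
    (K : Set E) (hKne : K.Nonempty) (hKcl : IsClosed K) (hK : Convex ℝ K)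
    (f : V →ₗ[ℝ] ℝ)
    (u : V) (lam : E) (hlamK : lam ∈ K)
    (h1 : ∀ v : V, a u v + ⟪T v, lam⟫ = f v)
    (h1' : ∀ μ ∈ K, ⟪T u, μ - lam⟫ ≤ 0)
    (ρ : ℝ) (hρ : 0 < ρ) (hρ0 : ρ * γ ^ 2 < 2 * α)
    (useq : ℕ → V) (lamseq : ℕ → E) (hlamseqK : ∀ k, lamseq k ∈ K)
    (hstep1 : ∀ k, ∀ v : V, a (useq k) v + ⟪T v, lamseq k⟫ = f v)
    (hstep2 : ∀ k, ∀ μ ∈ K,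
      ⟪(lamseq k + ρ • T (useq k)) - lamseq (k + 1), μ - lamseq (k + 1)⟫ ≤ 0) :
    Filter.Tendsto useq Filter.atTop (nhds u) ∧
      Filter.Tendsto lamseq Filter.atTop (nhds lam) :=
  stmt_18_general a α M hM hcoer hbound T hTsurj γ hT K f u lam hlamK h1 h1' ρ hρ hρ0 useq lamseq
    hlamseqK hstep1 hstep2
end
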